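/- arXiv:2209.02063 — 4 statements merged into one kernel-verified Lean document; each statement's English description precedes it below -/
import Mathlib

section
/- Let λ > 0, θ > 0 and let k ≥ 3 be an integer. Then 1 + k(k−1)θ/((k+1)(k−2)λ + kθ) < 1 + θ/λ if and only if k > 2λ/θ. -/
/-- For `λ, θ > 0` and an integer `k ≥ 3`, the critical benefit-to-cost ratio for
multilevel selection with death-birth updating on a `k`-regular graph is below the
well-mixed threshold `1 + θ/λ` iff `k > 2λ/θ`. -/
theorem stmt5 (lam θ : ℝ) (hlam : 0 < lam) (hθ : 0 < θ) (k : ℕ) (hk : 3 ≤ k) :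
    1 + (k : ℝ) * ((k : ℝ) - 1) * θ / (((k : ℝ) + 1) * ((k : ℝ) - 2) * lam + (k : ℝ) * θ)
        < 1 + θ / lam ↔ (k : ℝ) > 2 * lam / θ := by
  have hK : (3 : ℝ) ≤ (k : ℝ) := by exact_mod_cast hk
  have hD : 0 < ((k : ℝ) + 1) * ((k : ℝ) - 2) * lam + (k : ℝ) * θ := by
    have h1 : 0 < ((k : ℝ) + 1) * ((k : ℝ) - 2) * lam := by
      apply mul_pos (mul_pos (by linarith) (by linarith)) hlam
    nlinarith
  rw [add_lt_add_iff_left, div_lt_div_iff₀ hD hlam, gt_iff_lt, div_lt_iff₀ hθ]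
  constructor <;> intro h <;> nlinarith
end

section
/- Let λ > 0, θ > 0 and let k ≥ 3 be an integer. Then 1 + (k+1)kθ/((k+3)(k−2)λ + kθ) < 1 + θ/λ if and only if k > 6λ/θ. -/
/-- For `λ, θ > 0` and an integer `k ≥ 3`, the critical benefit-to-cost ratio for
multilevel selection with imitation updating on a `k`-regular graph is below the
well-mixed threshold `1 + θ/λ` iff `k > 6λ/θ`. -/
theorem stmt6 (lam θ : ℝ) (hlam : 0 < lam) (hθ : 0 < θ) (k : ℕ) (hk : 3 ≤ k) :
    1 + ((k : ℝ) + 1) * (k : ℝ) * θ / (((k : ℝ) + 3) * ((k : ℝ) - 2) * lam + (k : ℝ) * θ)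
        < 1 + θ / lam ↔ (k : ℝ) > 6 * lam / θ := by
  have hK : (3:ℝ) ≤ (k:ℝ) := by exact_mod_cast hk
  have hD : 0 < ((k : ℝ) + 3) * ((k : ℝ) - 2) * lam + (k : ℝ) * θ := by nlinarith [mul_pos (mul_pos (by linarith : (0:ℝ) < (k:ℝ)+3) (by linarith : (0:ℝ) < (k:ℝ)-2)) hlam, mul_pos (by linarith : (0:ℝ) < (k:ℝ)) hθ]
  rw [add_lt_add_iff_left, div_lt_div_iff₀ hD hlam, gt_iff_lt, div_lt_iff₀ hθ]
  constructor <;> intro h <;> nlinarith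
end

section
/- Let α < 0 and let k ≥ 3 be an integer. Define T_0^{DB}(k) = (k+1)/(2k) + ((k−1)/2)(β/α), T_1^{DB}(k) = (k−1)(k+1)/(2k) + ((k−1)/2)(β/α), and T_{λ*}^{DB}(k) = (k+1)/(2k) + (1/k)(β/α). Then: (i) j_k^{DB}(0) > 0 if and only if x* > T_0^{DB}(k); (ii) j_k^{DB}(1) > 0 if and only if x* > T_1^{DB}(k); (iii) b_k^{DB} > 0 if and only if x* > T_{λ*}^{DB}(k), and consequently, if in addition γ + α > 0 and θ > 0, then λ*_{k,DB} < −(β+α)θ/(γ+α) if and only if x* > T_{λ*}^{DB}(k). -/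
/-- The Ohtsuki–Nowak shift for death-birth updating on a `k`-regular graph. -/
noncomputable def bDB (α β γ : ℝ) (k : ℕ) : ℝ :=
  (α + 2 * β + (k : ℝ) * (γ + α)) / (((k : ℝ) + 1) * ((k : ℝ) - 2))

/-- Within-group selection gradient for DB updating on a `k`-regular graph. -/
noncomputable def jDB (α β γ : ℝ) (k : ℕ) (x : ℝ) : ℝ :=
  β + α * x + bDB α β γ k

/-
Both sides of each equivalence are positive multiples of one polynomial in `k` and the payoff
parameters: `j_k^{DB}(x)` and `b_k^{DB}` carry the positive denominator `(k+1)(k-2)`, and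
`x* - T` becomes such a polynomial after multiplying by `-2αk > 0`. The comparison of the two
thresholds reduces to the sign of `b_k^{DB}`, since both share the positive factor `θ/(γ+α)`.
-/

section DeathBirth

variable {α β γ : ℝ} {k : ℕ}

lemma bDB_denominator_pos (hk : 3 ≤ k) : 0 < ((k : ℝ) + 1) * ((k : ℝ) - 2) := by
  have hk' : (3 : ℝ) ≤ k := by exact_mod_cast hk
  nlinarith

lemma bDB_pos_iff (hk : 3 ≤ k) : 0 < bDB α β γ k ↔ 0 < α + 2 * β + k * (γ + α) :=
  div_pos_iff_of_pos_right (bDB_denominator_pos hk)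

lemma jDB_pos_iff (hk : 3 ≤ k) (x : ℝ) :
    0 < jDB α β γ k x ↔
      0 < (β + α * x) * (((k : ℝ) + 1) * ((k : ℝ) - 2)) + (α + 2 * β + k * (γ + α)) := by
  have hD := bDB_denominator_pos hk
  rw [jDB, bDB, ← mul_pos_iff_of_pos_right hD, add_mul, div_mul_cancel₀ _ hD.ne']

end DeathBirth

lemma lt_div_neg_two_mul_iff {α β γ : ℝ} (hα : α < 0) (p q : ℝ) :
    p + q * (β / α) < γ / (-2 * α) ↔ 0 < γ + 2 * α * p + 2 * q * β := by
  have hprod : (p + q * (β / α)) * (-2 * α) = -(2 * α * p + 2 * q * β) := by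
    field_simp [hα.ne]
  rw [lt_div_iff₀ (by linarith), hprod]
  constructor <;> intro h <;> linarith

/-- For PD games with `α < 0` and DB updating on a `k`-regular graph (`k ≥ 3`):
(i) the full-defector equilibrium is unstable (`j_k^{DB}(0) > 0`) iff
`x* = γ/(-2α) > T_0^{DB}(k)`; (ii) the full-cooperator equilibrium is stable
(`j_k^{DB}(1) > 0`) iff `x* > T_1^{DB}(k)`; (iii) `b_k^{DB} > 0` iff
`x* > T_{λ*}^{DB}(k)`, and consequently, if `γ + α > 0` and `θ > 0`, the
multilevel threshold `λ*_{k,DB}` is below the well-mixed threshold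
`-(β+α)θ/(γ+α)` iff `x* > T_{λ*}^{DB}(k)`. -/
theorem stmt7 (α β γ θ : ℝ) (hα : α < 0) (k : ℕ) (hk : 3 ≤ k) :
    (jDB α β γ k 0 > 0 ↔
      γ / (-2 * α) > ((k : ℝ) + 1) / (2 * (k : ℝ)) + (((k : ℝ) - 1) / 2) * (β / α)) ∧
    (jDB α β γ k 1 > 0 ↔
      γ / (-2 * α) > ((k : ℝ) - 1) * ((k : ℝ) + 1) / (2 * (k : ℝ))
        + (((k : ℝ) - 1) / 2) * (β / α)) ∧
    (bDB α β γ k > 0 ↔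
      γ / (-2 * α) > ((k : ℝ) + 1) / (2 * (k : ℝ)) + (1 / (k : ℝ)) * (β / α)) ∧
    (γ + α > 0 → θ > 0 →
      (-(β + α + bDB α β γ k) * θ / (γ + α) < -(β + α) * θ / (γ + α) ↔
        γ / (-2 * α) > ((k : ℝ) + 1) / (2 * (k : ℝ)) + (1 / (k : ℝ)) * (β / α))) := by
  have hK : (0 : ℝ) < k := by exact_mod_cast (by omega : 0 < k)
  have scale : ∀ {a b : ℝ}, (k : ℝ) * b = a → (0 < a ↔ 0 < b) := fun h =>
    h ▸ mul_pos_iff_of_pos_left hK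
  have hb : bDB α β γ k > 0 ↔
      γ / (-2 * α) > ((k : ℝ) + 1) / (2 * (k : ℝ)) + (1 / (k : ℝ)) * (β / α) := by
    rw [gt_iff_lt, gt_iff_lt, bDB_pos_iff hk, lt_div_neg_two_mul_iff hα]
    exact scale (by field_simp; ring)
  refine ⟨?_, ?_, hb, fun hγα hθ => ?_⟩
  · rw [gt_iff_lt, gt_iff_lt, jDB_pos_iff hk, lt_div_neg_two_mul_iff hα]
    exact scale (by field_simp; ring)
  · rw [gt_iff_lt, gt_iff_lt, jDB_pos_iff hk, lt_div_neg_two_mul_iff hα]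
    exact scale (by field_simp; ring)
  · rw [div_lt_div_iff_of_pos_right hγα, mul_lt_mul_iff_of_pos_right hθ, neg_lt_neg_iff,
      lt_add_iff_pos_right]
    exact hb
end

section
/- Let α < 0, β < 0 and let k ≥ 3 be an integer. Define T_0^{IM}(k) = (k+3)/(2k) + ((k+1)/2)(β/α), T_1^{IM}(k) = (k+3)(k−1)/(2k) + ((k+1)/2)(β/α), and T_{λ*}^{IM}(k) = (k+3)/(2k) + (3/k)(β/α). Then T_{λ*}^{IM}(k) ≤ T_0^{IM}(k) ≤ T_1^{IM}(k). Moreover T_{λ*}^{IM}(3) > 1, so no Prisoners' Dilemma game with intermediate group optimum x* < 1 can have cooperation under multilevel selection facilitated by imitation updating on a 3-regular graph relative to well-mixed interactions. -/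
/-- For `α < 0`, `β < 0` and integer `k ≥ 3`, the imitation-updating thresholds satisfy
`T_{λ*}^{IM}(k) ≤ T_0^{IM}(k) ≤ T_1^{IM}(k)`. Moreover `T_{λ*}^{IM}(3) > 1`, so no
Prisoners' Dilemma game with intermediate group optimum `x* = γ/(-2α) < 1` satisfies the
condition `x* > T_{λ*}^{IM}(3)` for multilevel selection to be facilitated by imitation
updating on a `3`-regular graph relative to well-mixed interactions. -/
theorem stmt11 (α β : ℝ) (hα : α < 0) (hβ : β < 0) (k : ℕ) (hk : 3 ≤ k) :
    (((k : ℝ) + 3) / (2 * (k : ℝ)) + (3 / (k : ℝ)) * (β / α) ≤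
        ((k : ℝ) + 3) / (2 * (k : ℝ)) + (((k : ℝ) + 1) / 2) * (β / α) ∧
      ((k : ℝ) + 3) / (2 * (k : ℝ)) + (((k : ℝ) + 1) / 2) * (β / α) ≤
        ((k : ℝ) + 3) * ((k : ℝ) - 1) / (2 * (k : ℝ)) + (((k : ℝ) + 1) / 2) * (β / α)) ∧
    ((3 : ℝ) + 3) / (2 * 3) + (3 / 3) * (β / α) > 1 ∧
    (∀ γ : ℝ, γ / (-2 * α) < 1 →
      ¬ γ / (-2 * α) > ((3 : ℝ) + 3) / (2 * 3) + (3 / 3) * (β / α)) := by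
  have hk' : (3 : ℝ) ≤ (k : ℝ) := by exact_mod_cast hk
  have hkpos : (0 : ℝ) < (k : ℝ) := by linarith
  have hba : 0 < β / α := div_pos_of_neg_of_neg hβ hα
  refine ⟨⟨?_, ?_⟩, ?_, ?_⟩
  · have h1 : 3 / (k : ℝ) ≤ ((k : ℝ) + 1) / 2 := by
      rw [div_le_div_iff₀ hkpos (by norm_num)]
      nlinarith
    nlinarith
  · have : ((k : ℝ) + 3) / (2 * (k : ℝ)) ≤ ((k : ℝ) + 3) * ((k : ℝ) - 1) / (2 * (k : ℝ)) := by
      apply div_le_div_of_nonneg_right _ (by linarith)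
      nlinarith
    linarith
  · have : (3 : ℝ) / 3 = 1 := by norm_num
    rw [this]; norm_num; linarith
  · intro γ hγ hgt
    have h1 : (1 : ℝ) < ((3 : ℝ) + 3) / (2 * 3) + (3 / 3) * (β / α) := by norm_num; linarith
    linarith
end
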